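/- Let G_c be the hypergraph with vertex set {x₁,x₂,x₃,x₄,x₅} and edges e₁={x₁,x₂}, e₂={x₂,x₃}, e₃={x₁,x₂,x₃}, e₄={x₂,x₄,x₅}. Then the element δ_{x₄}^{e₄} of S satisfies ⟨p, δ_{x₄}^{e₄}⟩ = 0 for every probabilistic model p of G_c (where ⟨p,u⟩ := Σ_{e∈E} Σ_{x∈e} p(x) u_x^e), yet δ_{x₄}^{e₄} ∉ J. In particular, J is properly contained in the common annihilator of the probabilistic models of G_c. -/
import Mathlib


noncomputable section

open scoped ComplexOrder

/-- The index set of the direct sum `S = ⊕_{e ∈ E} ℂ^e`: pairs `(e, x)` with `e ∈ E`, `x ∈ e`. -/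
abbrev Idx {V : Type} [DecidableEq V] (E : Finset (Finset V)) : Type :=
  {p : Finset V × V // p.1 ∈ E ∧ p.2 ∈ p.1}

/-- The canonical basis vector `δ_x^e` of `S`. -/
def delta {V : Type} [DecidableEq V] (E : Finset (Finset V)) (e : Finset V) (x : V) :
    Idx E → ℂ :=
  fun i => if i.1 = (e, x) then 1 else 0

/-- The element `1_e := ∑_{x ∈ e} δ_x^e` of `S`. -/
def oneEdge {V : Type} [DecidableEq V] (E : Finset (Finset V)) (e : Finset V) :
    Idx E → ℂ :=
  ∑ x ∈ e, delta E e x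

/-- The subspace `J` of `S`, spanned by the elements `1_e − 1_f` and `δ_x^e − δ_x^f`. -/
def Jsub {V : Type} [DecidableEq V] (E : Finset (Finset V)) : Submodule ℂ (Idx E → ℂ) :=
  Submodule.span ℂ
    ({u | ∃ e ∈ E, ∃ f ∈ E, u = oneEdge E e - oneEdge E f} ∪
     {u | ∃ e ∈ E, ∃ f ∈ E, ∃ x, x ∈ e ∧ x ∈ f ∧ u = delta E e x - delta E f x})

/-- The hypergraph `G_c` on vertices `x₁,…,x₅` (encoded as `0,…,4 : Fin 5`) with edges
`e₁ = {x₁,x₂}`, `e₂ = {x₂,x₃}`, `e₃ = {x₁,x₂,x₃}`, `e₄ = {x₂,x₄,x₅}`. -/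
def Ec : Finset (Finset (Fin 5)) := {{0, 1}, {1, 2}, {0, 1, 2}, {1, 3, 4}}

lemma sum_delta {V : Type} [DecidableEq V] [Fintype V] (E : Finset (Finset V))
    (c : V → ℂ) (e : Finset V) (x : V) (he : e ∈ E) (hx : x ∈ e) :
    ∑ i : Idx E, c i.1.2 * delta E e x i = c x := by
  have h : ∀ i : Idx E, c i.1.2 * delta E e x i =
      if i = ⟨(e, x), he, hx⟩ then c x else 0 := by
    intro i
    by_cases h : i.1 = (e, x)
    · have : i = ⟨(e, x), he, hx⟩ := Subtype.ext h
      simp [delta, h, this]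
    · have : ¬ i = ⟨(e, x), he, hx⟩ := fun hh => h (by rw [hh])
      simp [delta, h, this]
  simp [h]

lemma sum_oneEdge {V : Type} [DecidableEq V] [Fintype V] (E : Finset (Finset V))
    (c : V → ℂ) (e : Finset V) (he : e ∈ E) :
    ∑ i : Idx E, c i.1.2 * oneEdge E e i = ∑ x ∈ e, c x := by
  simp only [oneEdge, Finset.sum_apply, Finset.mul_sum]
  rw [Finset.sum_comm]
  exact Finset.sum_congr rfl fun x hx => sum_delta E c e x he hx

/-- witness functional coefficients -/
def cw : Fin 5 → ℂ := fun x => if x = 3 then 1 else if x = 4 then -1 else 0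

def phi : (Idx Ec → ℂ) →ₗ[ℂ] ℂ where
  toFun u := ∑ i : Idx Ec, cw i.1.2 * u i
  map_add' u v := by simp [mul_add, Finset.sum_add_distrib]
  map_smul' a u := by simp [Finset.mul_sum]; ring_nf; simp [mul_assoc, mul_comm, mul_left_comm]

lemma p3zero (p : Fin 5 → ℝ)
    (h : (∀ x, 0 ≤ p x ∧ p x ≤ 1) ∧ ∀ e ∈ Ec, ∑ x ∈ e, p x = 1) : p 3 = 0 := by
  obtain ⟨hpos, hsum⟩ := h
  have h1 := hsum {0,1} (by simp [Ec])
  have h3 := hsum {0,1,2} (by simp [Ec])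
  have h2 := hsum {1,2} (by simp [Ec])
  have h4 := hsum {1,3,4} (by simp [Ec])
  rw [show ({0,1} : Finset (Fin 5)) = {0,1} from rfl] at h1
  simp [Finset.sum_insert, Finset.mem_insert, Finset.mem_singleton] at h1 h2 h3 h4
  have := (hpos 3).1
  have := (hpos 4).1
  linarith

theorem stmt15 :
    (∀ p : Fin 5 → ℝ,
        ((∀ x, 0 ≤ p x ∧ p x ≤ 1) ∧ ∀ e ∈ Ec, ∑ x ∈ e, p x = 1) →
        ∑ i : Idx Ec, (p i.1.2 : ℂ) * delta Ec {1, 3, 4} 3 i = 0) ∧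
    delta Ec {1, 3, 4} (3 : Fin 5) ∉ Jsub Ec ∧
    (Jsub Ec : Set (Idx Ec → ℂ)) ⊂
      {u | ∀ p : Fin 5 → ℝ,
        ((∀ x, 0 ≤ p x ∧ p x ≤ 1) ∧ ∀ e ∈ Ec, ∑ x ∈ e, p x = 1) →
        ∑ i : Idx Ec, (p i.1.2 : ℂ) * u i = 0} := by
  have hE4 : ({1,3,4} : Finset (Fin 5)) ∈ Ec := by simp [Ec]
  have h34 : (3 : Fin 5) ∈ ({1,3,4} : Finset (Fin 5)) := by decide
  have part1 : ∀ p : Fin 5 → ℝ,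
      ((∀ x, 0 ≤ p x ∧ p x ≤ 1) ∧ ∀ e ∈ Ec, ∑ x ∈ e, p x = 1) →
      ∑ i : Idx Ec, (p i.1.2 : ℂ) * delta Ec {1, 3, 4} 3 i = 0 := by
    intro p hp
    rw [sum_delta Ec (fun x => (p x : ℂ)) _ _ hE4 h34]
    exact_mod_cast p3zero p hp
  have hphiJ : Jsub Ec ≤ LinearMap.ker phi := by
    rw [Jsub, Submodule.span_le]
    rintro u (⟨e, he, f, hf, rfl⟩ | ⟨e, he, f, hf, x, hxe, hxf, rfl⟩) <;>
      simp only [SetLike.mem_coe, LinearMap.mem_ker, map_sub, phi, LinearMap.coe_mk,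
        AddHom.coe_mk]
    · have key : ∀ g ∈ Ec, ∑ x ∈ g, cw x = 0 := by
        intro g hg
        fin_cases hg <;> simp [cw, Finset.sum_insert, Finset.mem_insert]
      rw [sum_oneEdge Ec cw e he, sum_oneEdge Ec cw f hf, key e he, key f hf, sub_zero]
    · rw [sum_delta Ec cw e x he hxe, sum_delta Ec cw f x hf hxf, sub_self]
  have part2 : delta Ec {1, 3, 4} (3 : Fin 5) ∉ Jsub Ec := by
    intro hmem
    have hker := hphiJ hmem
    rw [LinearMap.mem_ker] at hker
    have hval : phi (delta Ec {1,3,4} 3) = 1 := by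
      show ∑ i : Idx Ec, cw i.1.2 * delta Ec {1,3,4} 3 i = 1
      rw [sum_delta Ec cw _ _ hE4 h34]; simp [cw]
    rw [hker] at hval
    exact one_ne_zero hval.symm
  refine ⟨part1, part2, ?_, ?_⟩
  · intro u hu
    have hu' : u ∈ Jsub Ec := hu
    clear hu
    simp only [Set.mem_setOf_eq]
    intro p hp
    have split : ∀ (A B : Idx Ec → ℂ), (∑ i : Idx Ec, (p i.1.2 : ℂ) * (A - B) i) =
        (∑ i : Idx Ec, (p i.1.2 : ℂ) * A i) - ∑ i : Idx Ec, (p i.1.2 : ℂ) * B i := by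
      intro A B
      simp [mul_sub, Finset.sum_sub_distrib]
    induction hu' using Submodule.span_induction with
    | mem v hv =>
      rcases hv with ⟨e, he, f, hf, rfl⟩ | ⟨e, he, f, hf, x, hxe, hxf, rfl⟩
      · rw [split, sum_oneEdge Ec (fun y => ((p y : ℝ) : ℂ)) e he,
          sum_oneEdge Ec (fun y => ((p y : ℝ) : ℂ)) f hf]
        have h1 : (∑ x ∈ e, ((p x : ℝ) : ℂ)) = 1 := by
          rw [show (∑ x ∈ e, ((p x : ℝ) : ℂ)) = ((∑ x ∈ e, p x : ℝ) : ℂ) by push_cast; ring,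
            hp.2 e he]; norm_num
        have h2 : (∑ x ∈ f, ((p x : ℝ) : ℂ)) = 1 := by
          rw [show (∑ x ∈ f, ((p x : ℝ) : ℂ)) = ((∑ x ∈ f, p x : ℝ) : ℂ) by push_cast; ring,
            hp.2 f hf]; norm_num
        rw [h1, h2, sub_self]
      · rw [split, sum_delta Ec (fun y => ((p y : ℝ) : ℂ)) e x he hxe,
          sum_delta Ec (fun y => ((p y : ℝ) : ℂ)) f x hf hxf, sub_self]
    | zero => simp
    | add v w _ _ ihv ihw =>
      simp only [Pi.add_apply, mul_add, Finset.sum_add_distrib, ihv, ihw, add_zero]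
    | smul a v _ ihv =>
      simp only [Pi.smul_apply, smul_eq_mul, mul_left_comm, ← Finset.mul_sum, ihv, mul_zero]
  · intro hsub
    exact part2 (hsub (part1 ·))
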